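/- Every maximal tubing J of C_n has at least as many descents in its G-tree as there are right edges (edges to right children) in its G-tree. Consequently, any G-tree has at least as many descents as branching points, and the G-tree of a join irreducible element of MTub(C_n) has at most one branching point. -/

import Mathlib

open Finset

section TubingDefs

variable {n : ℕ}

/-- A tube of a graph: a nonempty vertex subset inducing a connected subgraph. -/
def IsTube (G : SimpleGraph (Fin n)) (X : Finset (Fin n)) : Prop :=
  X.Nonempty ∧ (G.induce (X : Set (Fin n))).Connected

/-- Tubes are compatible if nested or with disconnected union. -/
def TubeCompatible (G : SimpleGraph (Fin n)) (X Y : Finset (Fin n)) : Prop :=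
  X ⊆ Y ∨ Y ⊆ X ∨ ¬ IsTube G (X ∪ Y)

def IsTubing (G : SimpleGraph (Fin n)) (T : Finset (Finset (Fin n))) : Prop :=
  (∀ X ∈ T, IsTube G X) ∧ ∀ X ∈ T, ∀ Y ∈ T, TubeCompatible G X Y

def IsMaxTubing (G : SimpleGraph (Fin n)) (T : Finset (Finset (Fin n))) : Prop :=
  IsTubing G T ∧ ∀ T', IsTubing G T' → T ⊆ T' → T' = T

/-- The smallest tube of `T` containing `x`: the intersection of all tubes of `T`
containing `x`. -/
def tubingDown (T : Finset (Finset (Fin n))) (x : Fin n) : Finset (Fin n) :=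
  Finset.univ.filter (fun y => ∀ X ∈ T, x ∈ X → y ∈ X)

/-- The G-tree order of a tubing: `x ≤_T y` iff `x` lies in the smallest tube containing `y`. -/
def treeLE (T : Finset (Finset (Fin n))) (x y : Fin n) : Prop :=
  x ∈ tubingDown T y

/-- `y` covers `x` in the G-tree order of `T`. -/
def TreeCovBy (T : Finset (Finset (Fin n))) (x y : Fin n) : Prop :=
  treeLE T x y ∧ x ≠ y ∧ ∀ z, treeLE T x z → treeLE T z y → z = x ∨ z = y

/-- Flip cover relation on maximal tubings: exchange exactly one tube, with the
top (least-nested) element of the exchanged tube increasing. -/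
def FlipCover (G : SimpleGraph (Fin n)) (T J : Finset (Finset (Fin n))) : Prop :=
  IsMaxTubing G T ∧ IsMaxTubing G J ∧
  ∃ X Y, X ∈ T ∧ Y ∈ J ∧ X ≠ Y ∧ T.erase X = J.erase Y ∧
    ∃ x y : Fin n, tubingDown T x = X ∧ tubingDown J y = Y ∧ x < y

/-- The order of the poset of maximal tubings, generated by flip covers. -/
def MTubLE (G : SimpleGraph (Fin n)) :
    Finset (Finset (Fin n)) → Finset (Finset (Fin n)) → Prop :=
  Relation.ReflTransGen (FlipCover G)

/-- Inversions: pairs `i < j` with `j <_T i` in the G-tree. -/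
def invSet (T : Finset (Finset (Fin n))) : Set (Fin n × Fin n) :=
  {p | p.1 < p.2 ∧ treeLE T p.2 p.1}

/-- Coinversions: pairs `i < j` with `i <_T j` in the G-tree. -/
def coinvSet (T : Finset (Finset (Fin n))) : Set (Fin n × Fin n) :=
  {p | p.1 < p.2 ∧ treeLE T p.1 p.2}

/-- Incomparable pairs `i < j` of the G-tree. -/
def incSet (T : Finset (Finset (Fin n))) : Set (Fin n × Fin n) :=
  {p | p.1 < p.2 ∧ ¬ treeLE T p.1 p.2 ∧ ¬ treeLE T p.2 p.1}

/-- The cut of the tube `J↓(x)`, where `m` is the root of the G-tree of `J`. -/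
def cutTube (J : Finset (Finset (Fin n))) (m x : Fin n) : Finset (Fin n) :=
  if x = m then tubingDown J x
  else if x < m then (tubingDown J x).filter (fun y => y < m)
  else (tubingDown J x).filter (fun y => m < y)

/-- The Cut map on maximal tubings of the cycle. -/
def CutTubing (J : Finset (Finset (Fin n))) (m : Fin n) : Finset (Finset (Fin n)) :=
  Finset.image (cutTube J m) Finset.univ

/-- Inversions of a word: pairs `i < j` such that `j` appears before `i`. -/
def listInvSet (w : List (Fin n)) : Set (Fin n × Fin n) :=
  {p | p.1 < p.2 ∧ p.1 ∈ w ∧ p.2 ∈ w ∧ w.idxOf p.2 < w.idxOf p.1}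

end TubingDefs

/-- The path graph `1 - 2 - ⋯ - n`. -/
def pathGraph (n : ℕ) : SimpleGraph (Fin n) :=
  SimpleGraph.fromRel (fun a b => (a : ℕ) + 1 = (b : ℕ))

/-- The cycle graph `1 - 2 - ⋯ - n - 1`. -/
def cycleGraph (n : ℕ) : SimpleGraph (Fin n) :=
  SimpleGraph.fromRel (fun a b => (a : ℕ) + 1 = (b : ℕ) ∨ ((a : ℕ) = 0 ∧ (b : ℕ) = n - 1))

open scoped Classical

/-- Position of `a` in the cyclic order `<_m` (0-indexed vertices). -/
def cycPos (n : ℕ) (m a : Fin n) : ℕ := ((a : ℕ) + n - (m : ℕ) - 1) % n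


/-!
Tubes of the cycle avoiding the root `m` are the intervals of the order `<_m`, and the tube of a
child `c ⋖ p` is the part of the tube of `p` on the side of `p` containing `c`. A right edge that
is an ascent must have `c < m < p`, so it crosses the edge `{n - 1, 0}` and its tube contains `0`:
all such edges lie on the path from `0` to the root, and above each of them this path leaves the
set `{z | m < z}` by a descent that is not a right edge. A branching point is not the root, which
has a single child, and has a right child, since two children on the same side would have the same
tube. Finally, each descent `c` gives a flip removing the tube of `c`, and these flips are distinct,
so an element covering a unique element has at most one descent.
-/

section Orbits

variable {α : Type*} {f : α → α}

lemma Function.IsPeriodicPt.eq_of_iterate_eq_fixedPt {r y : α} {s N : ℕ}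
    (hy : Function.IsPeriodicPt f s y) (hs : 0 < s) (hr : f r = r) (hN : f^[N] y = r) : y = r := by
  rw [← (hy.mul_const N).eq, ← Nat.sub_add_cancel (Nat.le_mul_of_pos_left N hs),
    Function.iterate_add_apply, hN, Function.iterate_fixed hr]

/-- Junk value `x` when the orbit of `x` never leaves `P`. -/
noncomputable def lastBeforeExit (f : α → α) (P : α → Prop) [DecidablePred P] (x : α) :
    α :=
  if h : ∃ j, ¬ P (f^[j + 1] x) then f^[Nat.find h] x else x

lemma exists_lastBeforeExit_eq {P : α → Prop} [DecidablePred P] {x : α} (hx : P x)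
    (h : ∃ j, ¬ P (f^[j + 1] x)) : ∃ j, lastBeforeExit f P x = f^[j] x ∧
      (∀ i ≤ j, P (f^[i] x)) ∧ ¬ P (f^[j + 1] x) := by
  refine ⟨Nat.find h, dif_pos h, fun i hi => ?_, Nat.find_spec h⟩
  rcases i with _ | i
  · exact hx
  · exact not_not.1 (Nat.find_min h (by omega))

lemma exists_not_iterate_succ {P : α → Prop} {r : α} (hPr : ¬ P r)
    (hreach : ∀ x, ∃ i, f^[i] x = r) {x : α} (hx : P x) : ∃ j, ¬ P (f^[j + 1] x) := by
  obtain ⟨i, hi⟩ := hreach x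
  rcases i with _ | i
  · exact absurd (hi ▸ hx) hPr
  · exact ⟨i, hi ▸ hPr⟩

/-- Above `c`, the orbit stays in `P` until `lastBeforeExit` and then leaves it, so it can only
reach `d ∉ P` later; equal values would make `lastBeforeExit` periodic, hence the root. -/
lemma eq_of_lastBeforeExit_eq {P : α → Prop} [DecidablePred P] {r : α} (hr : f r = r)
    (hPr : ¬ P r) (hreach : ∀ x, ∃ i, f^[i] x = r) {c d : α} {i : ℕ} (hd : ¬ P d)
    (hc : P (f c)) (hfd : P (f d)) (hcd : f^[i] c = d)
    (hcd' : lastBeforeExit f P (f c) = lastBeforeExit f P (f d)) : c = d := by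
  rcases i with _ | i
  · exact hcd
  obtain ⟨j, hj, hPj, -⟩ := exists_lastBeforeExit_eq hc (exists_not_iterate_succ hPr hreach hc)
  obtain ⟨k, hk, -⟩ := exists_lastBeforeExit_eq hfd (exists_not_iterate_succ hPr hreach hfd)
  have hji : j < i := by
    by_contra! hij
    rw [Function.iterate_succ_apply] at hcd
    exact hd (hcd ▸ hPj i hij)
  have hper : Function.IsPeriodicPt f (k + 1 + i - j) (lastBeforeExit f P (f c)) := calc
    f^[k + 1 + i - j] (lastBeforeExit f P (f c)) = f^[k + 1 + i - j + j] (f c) := by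
      rw [hj, Function.iterate_add_apply]
    _ = f^[k] (f^[i + 1] (f c)) := by
      rw [← Function.iterate_add_apply]
      congr 1
      omega
    _ = lastBeforeExit f P (f c) := by
      rw [hcd', hk, ← hcd, ← Function.iterate_succ_apply, Function.iterate_succ_apply']
  obtain ⟨N, hN⟩ := hreach (lastBeforeExit f P (f c))
  exact absurd (hper.eq_of_iterate_eq_fixedPt (by omega) hr hN ▸ hj ▸ hPj j le_rfl) hPr

/-- In a rooted forest given by its parent map `f`, the first exit from `P` above an entry into
`P` lies below the next entry on the chain. -/
theorem card_filter_enter_le_card_filter_exit [Fintype α] (P : α → Prop) [DecidablePred P]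
    {r : α} (hr : f r = r) (hPr : ¬ P r) (hreach : ∀ x, ∃ i, f^[i] x = r)
    (hchain : ∀ c d, ¬ P c → P (f c) → ¬ P d → P (f d) →
      ∃ i, f^[i] c = d ∨ f^[i] d = c) :
    (univ.filter fun c => ¬ P c ∧ P (f c)).card ≤
      (univ.filter fun u => P u ∧ ¬ P (f u)).card := by
  refine card_le_card_of_injOn (fun c => lastBeforeExit f P (f c)) (fun c hc => ?_)
    (fun c hc d hd hcd => ?_)
  · obtain ⟨-, hfc⟩ := (mem_filter.1 hc).2
    obtain ⟨j, hj, hPj, hout⟩ :=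
      exists_lastBeforeExit_eq hfc (exists_not_iterate_succ hPr hreach hfc)
    rw [coe_filter, Set.mem_ofPred_eq]
    beta_reduce
    rw [hj, ← Function.iterate_succ_apply' f j]
    exact ⟨mem_univ _, hPj j le_rfl, hout⟩
  · simp only [coe_filter, mem_univ, true_and, Set.mem_ofPred_eq] at hc hd
    obtain ⟨i, hi | hi⟩ := hchain c d hc.1 hc.2 hd.1 hd.2
    · exact eq_of_lastBeforeExit_eq hr hPr hreach hd.1 hc.2 hd.2 hi hcd
    · exact (eq_of_lastBeforeExit_eq hr hPr hreach hc.1 hd.2 hc.2 hi hcd.symm).symm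

end Orbits

section Tubing

variable {n : ℕ} {G : SimpleGraph (Fin n)} {A S X Y : Finset (Fin n)}

lemma IsTube.union_of_mem (hX : IsTube G X) (hY : IsTube G Y) {v : Fin n}
    (hvX : v ∈ X) (hvY : v ∈ Y) : IsTube G (X ∪ Y) :=
  ⟨hX.1.mono subset_union_left, by
    rw [coe_union]
    exact SimpleGraph.induce_union_connected hX.2.preconnected hY.2.preconnected
      ⟨v, hvX, hvY⟩⟩

lemma IsTube.union_of_adj (hX : IsTube G X) (hY : IsTube G Y) {u v : Fin n}
    (hu : u ∈ X) (hv : v ∈ Y) (huv : G.Adj u v) : IsTube G (X ∪ Y) :=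
  ⟨hX.1.mono subset_union_left, by
    rw [coe_union]
    exact SimpleGraph.connected_induce_union hX.2.preconnected hY.2.preconnected hu hv huv⟩

lemma TubeCompatible.symm (h : TubeCompatible G X Y) : TubeCompatible G Y X := by
  unfold TubeCompatible at *
  rw [union_comm]
  tauto

lemma IsTubing.mono {T' : Finset (Finset (Fin n))} (hT : IsTubing G T) (h : T' ⊆ T) :
    IsTubing G T' :=
  ⟨fun X hX => hT.1 X (h hX), fun X hX Y hY => hT.2 X (h hX) Y (h hY)⟩

lemma IsTubing.insert (hT : IsTubing G T) (hS : IsTube G S)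
    (h : ∀ X ∈ T, TubeCompatible G S X) : IsTubing G (insert S T) := by
  refine ⟨fun X hX => ?_, fun X hX Y hY => ?_⟩
  · rcases mem_insert.1 hX with rfl | hX
    exacts [hS, hT.1 X hX]
  · rcases mem_insert.1 hX with rfl | hXT <;> rcases mem_insert.1 hY with rfl | hYT
    · exact Or.inl subset_rfl
    · exact h Y hYT
    · exact (h X hXT).symm
    · exact hT.2 X hXT Y hYT

lemma IsMaxTubing.mem_of_forall_compatible (hT : IsMaxTubing G T) (hS : IsTube G S)
    (h : ∀ X ∈ T, TubeCompatible G S X) : S ∈ T := by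
  rw [← hT.2 _ (hT.1.insert hS h) (subset_insert _ _)]
  exact mem_insert_self _ _

/-- A tube separated from `A` is separated from `S`. -/
lemma IsTubing.forall_compatible_of_subset (hT : IsTubing G T) (hA : A ∈ T) (hS : IsTube G S)
    (hSA : S ⊆ A)
    (h : ∀ X ∈ T, X ⊆ A → TubeCompatible G S X) : ∀ X ∈ T, TubeCompatible G S X := by
  intro X hX
  rcases hT.2 X hX A hA with hXA | hAX | hsep
  · exact h X hX hXA
  · exact Or.inl (hSA.trans hAX)
  · refine Or.inr (Or.inr fun hSX => hsep ?_)
    obtain ⟨s, hs⟩ := hS.1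
    have := hSX.union_of_mem (hT.1 A hA) (mem_union_left _ hs) (hSA hs)
    rwa [union_comm S, union_assoc, union_eq_right.2 hSA] at this

lemma mem_tubingDown {x y : Fin n} : y ∈ tubingDown T x ↔ ∀ X ∈ T, x ∈ X → y ∈ X := by
  simp [tubingDown]

lemma mem_tubingDown_self (T : Finset (Finset (Fin n))) (x : Fin n) : x ∈ tubingDown T x :=
  mem_tubingDown.2 fun _ _ hx => hx

lemma tubingDown_subset (hX : X ∈ T) {x : Fin n} (hx : x ∈ X) : tubingDown T x ⊆ X :=
  fun _ hy => mem_tubingDown.1 hy X hX hx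

lemma treeLE_iff_subset {x y : Fin n} :
    treeLE T x y ↔ tubingDown T x ⊆ tubingDown T y := by
  refine ⟨fun h z hz => mem_tubingDown.2 fun X hX hy => ?_,
    fun h => h (mem_tubingDown_self T x)⟩
  exact mem_tubingDown.1 hz X hX (mem_tubingDown.1 h X hX hy)

lemma IsTubing.tubingDown_mem_or_eq_univ (hT : IsTubing G T) (x : Fin n) :
    tubingDown T x ∈ T ∨ tubingDown T x = univ := by
  by_cases hx : ∃ X ∈ T, x ∈ X
  · left
    obtain ⟨X₀, hX₀F, hmin⟩ :=
      (T.filter (x ∈ ·)).exists_min_image card (by simpa [Finset.Nonempty] using hx)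
    obtain ⟨hX₀, hxX₀⟩ := mem_filter.1 hX₀F
    suffices tubingDown T x = X₀ by rwa [this]
    refine (tubingDown_subset hX₀ hxX₀).antisymm fun y hy => mem_tubingDown.2 fun X hX hxX => ?_
    rcases hT.2 X₀ hX₀ X hX with h | h | h
    · exact h hy
    · rw [eq_of_subset_of_card_le h (hmin X (mem_filter.2 ⟨hX, hxX⟩))]
      exact hy
    · exact absurd ((hT.1 X₀ hX₀).union_of_mem (hT.1 X hX) hxX₀ hxX) h
  · push Not at hx
    exact Or.inr (eq_univ_of_forall fun y => mem_tubingDown.2 fun X hX hxX => absurd hxX (hx X hX))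

lemma IsTubing.tubingDown_subset_or_subset (hT : IsTubing G T) {x y z : Fin n}
    (hx : z ∈ tubingDown T x) (hy : z ∈ tubingDown T y) :
    tubingDown T x ⊆ tubingDown T y ∨ tubingDown T y ⊆ tubingDown T x := by
  rcases hT.tubingDown_mem_or_eq_univ x with hX | hX
  · rcases hT.tubingDown_mem_or_eq_univ y with hY | hY
    · rcases hT.2 _ hX _ hY with h | h | h
      · exact Or.inl h
      · exact Or.inr h
      · exact absurd ((hT.1 _ hX).union_of_mem (hT.1 _ hY) hx hy) h
    · exact Or.inl (hY ▸ subset_univ _)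
  · exact Or.inr (hX ▸ subset_univ _)

/-- If every vertex lay in a proper subtube, a largest one would be adjacent to, hence
incompatible with, another. -/
lemma IsTubing.exists_mem_forall_ssubset_notMem (hT : IsTubing G T) (hX : X ∈ T) :
    ∃ r ∈ X, ∀ Y ∈ T, Y ⊂ X → r ∉ Y := by
  by_contra! hcov
  obtain ⟨v₀, hv₀⟩ := (hT.1 X hX).1
  obtain ⟨Y₀, hY₀, hY₀X, -⟩ := hcov v₀ hv₀
  obtain ⟨Y, hYF, hmax⟩ :=
    (T.filter (· ⊂ X)).exists_max_image card ⟨Y₀, mem_filter.2 ⟨hY₀, hY₀X⟩⟩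
  obtain ⟨hY, hYX⟩ := mem_filter.1 hYF
  obtain ⟨v, hvX, hvY⟩ := not_subset.1 hYX.2
  obtain ⟨u, hu⟩ := (hT.1 Y hY).1
  obtain ⟨w⟩ := (hT.1 X hX).2.preconnected ⟨v, mem_coe.2 hvX⟩ ⟨u, mem_coe.2 (hYX.1 hu)⟩
  obtain ⟨⟨⟨⟨p, hpX⟩, ⟨q, _⟩⟩, hpq⟩, _, hpY, hqY⟩ :=
    w.exists_boundary_dart {t | t.1 ∉ Y} hvY (not_not.2 hu)
  simp only [Set.mem_ofPred_eq, not_not] at hpY hqY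
  obtain ⟨Y', hY', hY'X, hpY'⟩ := hcov p hpX
  rcases hT.2 Y' hY' Y hY with h | h | h
  · exact hpY (h hpY')
  · exact hpY (eq_of_subset_of_card_le h (hmax Y' (mem_filter.2 ⟨hY', hY'X⟩)) ▸ hpY')
  · exact h ((hT.1 Y' hY').union_of_adj (hT.1 Y hY) hpY' hqY hpq)

lemma IsTubing.exists_tubingDown_eq (hT : IsTubing G T) (hX : X ∈ T) :
    ∃ r ∈ X, tubingDown T r = X := by
  obtain ⟨r, hrX, hr⟩ := hT.exists_mem_forall_ssubset_notMem hX
  refine ⟨r, hrX, (tubingDown_subset hX hrX).antisymm fun z hz => ?_⟩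
  refine mem_tubingDown.2 fun Y hY hrY => ?_
  rcases hT.2 Y hY X hX with h | h | h
  · rcases h.eq_or_ssubset with rfl | hss
    exacts [hz, absurd hrY (hr Y hY hss)]
  · exact h hz
  · exact absurd ((hT.1 Y hY).union_of_mem (hT.1 X hX) hrY hrX) h

lemma IsTubing.card_le (hT : IsTubing G T) : T.card ≤ n := by
  have hsub : T ⊆ univ.image (tubingDown T) := fun X hX => by
    obtain ⟨r, -, hr⟩ := hT.exists_tubingDown_eq hX
    exact mem_image.2 ⟨r, mem_univ _, hr⟩
  simpa using (card_le_card hsub).trans card_image_le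

lemma IsTubing.tubingDown_eq_of_treeCovBy (hT : IsTubing G T) {c p : Fin n}
    (h : TreeCovBy T c p) (hS : S ∈ T) (hcS : c ∈ S) (hSp : S ⊆ tubingDown T p)
    (hpS : p ∉ S) : tubingDown T c = S := by
  obtain ⟨r, hrS, hr⟩ := hT.exists_tubingDown_eq hS
  have hcr : treeLE T c r := by rw [treeLE, hr]; exact hcS
  rcases h.2.2 r hcr (hSp hrS) with rfl | rfl
  exacts [hr, absurd hrS hpS]

lemma notMem_of_tubingDown_eq_univ {m : Fin n} (hm : tubingDown T m = univ) (hX : X ∈ T)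
    (hXu : X ≠ univ) : m ∉ X :=
  fun hmX => hXu (univ_subset_iff.1 (hm ▸ tubingDown_subset hX hmX))

lemma IsTubing.treeCovBy_unique (hT : IsTubing G T) {c p p' : Fin n} (h : TreeCovBy T c p)
    (h' : TreeCovBy T c p') : p = p' := by
  rcases hT.tubingDown_subset_or_subset h.1 h'.1 with hsub | hsub
  · exact (h'.2.2 p h.1 (hsub (mem_tubingDown_self T p))).resolve_left (Ne.symm h.2.1)
  · exact ((h.2.2 p' h'.1 (hsub (mem_tubingDown_self T p'))).resolve_left
      (Ne.symm h'.2.1)).symm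

lemma IsTubing.notMem_of_treeCovBy (hT : IsTubing G T) {c p : Fin n} (h : TreeCovBy T c p)
    (hX : X ∈ T) (hXc : X ≠ tubingDown T c) (hXp : X ⊆ tubingDown T p)
    (hXp' : X ≠ tubingDown T p) : c ∉ X := fun hcX =>
  hXc (hT.tubingDown_eq_of_treeCovBy h hX hcX hXp
    fun hpX => hXp' (hXp.antisymm (tubingDown_subset hX hpX))).symm

end Tubing

section CyclicOrder

variable {n : ℕ}

lemma cycPos_lt (m v : Fin n) : cycPos n m v < n := Nat.mod_lt _ m.pos

lemma cycPos_of_lt {m v : Fin n} (h : m < v) : cycPos n m v = v - m - 1 := by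
  have hv := v.is_lt
  rw [Fin.lt_def] at h
  unfold cycPos
  rw [show (v : ℕ) + n - m - 1 = n + (v - m - 1) by omega, Nat.add_mod_left,
    Nat.mod_eq_of_lt (by omega)]

lemma cycPos_of_le {m v : Fin n} (h : v ≤ m) : cycPos n m v = v + n - m - 1 := by
  have hm := m.is_lt
  rw [Fin.le_def] at h
  exact Nat.mod_eq_of_lt (by omega)

lemma cycPos_self (m : Fin n) : cycPos n m m = n - 1 := by
  rw [cycPos_of_le le_rfl]
  omega

lemma cycPos_cases (m v : Fin n) :
    ((m : ℕ) < v ∧ cycPos n m v = v - m - 1) ∨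
      ((v : ℕ) ≤ m ∧ cycPos n m v = v + n - m - 1) := by
  rcases lt_or_ge m v with h | h
  exacts [Or.inl ⟨h, cycPos_of_lt h⟩, Or.inr ⟨h, cycPos_of_le h⟩]

lemma cycPos_injective (m : Fin n) : Function.Injective (cycPos n m) := by
  intro v w h
  have := m.is_lt; have := v.is_lt; have := w.is_lt
  rcases cycPos_cases m v with ⟨hv, ev⟩ | ⟨hv, ev⟩ <;>
  rcases cycPos_cases m w with ⟨hw, ew⟩ | ⟨hw, ew⟩ <;>
  · ext
    omega

lemma cycPos_lt_pred {m v : Fin n} (hv : v ≠ m) : cycPos n m v < n - 1 := by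
  have := v.is_lt
  rw [ne_eq, Fin.ext_iff] at hv
  rcases cycPos_cases m v with ⟨h, e⟩ | ⟨h, e⟩ <;> omega

lemma exists_cycPos_eq (m : Fin n) {q : ℕ} (hq : q < n) : ∃ v, cycPos n m v = q := by
  have hm := m.is_lt
  refine ⟨⟨(m + 1 + q) % n, Nat.mod_lt _ m.pos⟩, ?_⟩
  show ((m + 1 + q) % n + n - m - 1) % n = q
  rw [show (m + 1 + q) % n + n - m - 1 = (m + 1 + q) % n + (n - m - 1) by omega,
    Nat.mod_add_mod, show (m : ℕ) + 1 + q + (n - m - 1) = q + n by omega, Nat.add_mod_right,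
    Nat.mod_eq_of_lt hq]

lemma cycleGraph_adj_iff {a b : Fin n} : (cycleGraph n).Adj a b ↔ a ≠ b ∧
    ((b : ℕ) = a + 1 ∨ (a : ℕ) = b + 1 ∨ ((a : ℕ) = 0 ∧ (b : ℕ) = n - 1) ∨
      ((b : ℕ) = 0 ∧ (a : ℕ) = n - 1)) := by
  unfold cycleGraph
  rw [SimpleGraph.fromRel_adj]
  constructor <;> rintro ⟨h1, h2⟩ <;> exact ⟨h1, by omega⟩

lemma cycleGraph_adj_of_cycPos_eq_succ {m a b : Fin n}
    (h : cycPos n m b = cycPos n m a + 1) : (cycleGraph n).Adj a b := by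
  have := m.is_lt; have := a.is_lt; have := b.is_lt
  refine cycleGraph_adj_iff.2 ⟨fun e => by rw [e] at h; omega, ?_⟩
  rcases cycPos_cases m a with ⟨ha, ea⟩ | ⟨ha, ea⟩ <;>
  rcases cycPos_cases m b with ⟨hb, eb⟩ | ⟨hb, eb⟩ <;>
  omega

lemma cycPos_eq_succ_of_adj {m a b : Fin n} (h : (cycleGraph n).Adj a b) (ha : a ≠ m)
    (hb : b ≠ m) : cycPos n m b = cycPos n m a + 1 ∨ cycPos n m a = cycPos n m b + 1 := by
  have := m.is_lt; have := a.is_lt; have := b.is_lt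
  obtain ⟨hab, h⟩ := cycleGraph_adj_iff.1 h
  rw [ne_eq, Fin.ext_iff] at ha hb hab
  rcases cycPos_cases m a with ⟨ha', ea⟩ | ⟨ha', ea⟩ <;>
  rcases cycPos_cases m b with ⟨hb', eb⟩ | ⟨hb', eb⟩ <;>
  omega

end CyclicOrder

section Intervals

variable {n : ℕ} {m : Fin n} {S : Finset (Fin n)}

def IsIntervalAt (m : Fin n) (S : Finset (Fin n)) : Prop :=
  ∀ a ∈ S, ∀ b ∈ S, ∀ z,
    cycPos n m a ≤ cycPos n m z → cycPos n m z ≤ cycPos n m b → z ∈ S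

lemma isIntervalAt_univ (m : Fin n) : IsIntervalAt m univ :=
  fun _ _ _ _ z _ _ => mem_univ z

lemma isIntervalAt_univ_erase (m : Fin n) : IsIntervalAt m (univ.erase m) := by
  intro a _ b hb z _ hzb
  refine mem_erase.2 ⟨fun hzm => ?_, mem_univ z⟩
  have := cycPos_lt_pred (ne_of_mem_erase hb)
  rw [hzm, cycPos_self] at hzb
  omega

lemma exists_mem_support_cycPos_eq {a b : Fin n} (w : (cycleGraph n).Walk a b)
    (hm : m ∉ w.support) {q : ℕ} (haq : cycPos n m a ≤ q) (hqb : q ≤ cycPos n m b) :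
    ∃ v ∈ w.support, cycPos n m v = q := by
  induction w with
  | nil => exact ⟨_, SimpleGraph.Walk.start_mem_support _, by omega⟩
  | @cons u x b hadj w ih =>
    rw [SimpleGraph.Walk.support_cons, List.mem_cons, not_or] at hm
    rcases eq_or_lt_of_le haq with hq | hq
    · exact ⟨u, by simp, hq⟩
    · have hx : x ≠ m := fun e => hm.2 (e ▸ w.start_mem_support)
      obtain ⟨v, hv, hvq⟩ := ih hm.2 (by
        have := cycPos_eq_succ_of_adj hadj (Ne.symm hm.1) hx
        omega) hqb
      exact ⟨v, by simp [hv], hvq⟩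

lemma IsTube.isIntervalAt (hS : IsTube (cycleGraph n) S) (hm : m ∉ S) : IsIntervalAt m S := by
  intro a ha b hb z haz hzb
  obtain ⟨w₀⟩ := hS.2.preconnected ⟨a, mem_coe.2 ha⟩ ⟨b, mem_coe.2 hb⟩
  let w := w₀.map (SimpleGraph.Embedding.induce (S : Set (Fin n))).toHom
  have hsup : ∀ v ∈ w.support, v ∈ S := by
    intro v hv
    rw [SimpleGraph.Walk.support_map, List.mem_map] at hv
    obtain ⟨u, -, rfl⟩ := hv
    exact u.2
  obtain ⟨v, hv, hvz⟩ := exists_mem_support_cycPos_eq w (fun h => hm (hsup m h)) haz hzb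
  exact cycPos_injective m hvz ▸ hsup v hv

/-- Consecutive vertices of `<_m` are adjacent, so an interval is connected. -/
lemma IsIntervalAt.isTube (h : IsIntervalAt m S) (hne : S.Nonempty) :
    IsTube (cycleGraph n) S := by
  refine ⟨hne, (SimpleGraph.connected_iff _).2 ⟨?_, hne.coe_sort⟩⟩
  have reach : ∀ k, ∀ x y (hx : x ∈ S) (hy : y ∈ S), cycPos n m y = cycPos n m x + k →
      ((cycleGraph n).induce (S : Set (Fin n))).Reachable ⟨x, hx⟩ ⟨y, hy⟩ := by
    intro k
    induction k with
    | zero =>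
      intro x y hx hy hxy
      obtain rfl := cycPos_injective m hxy
      rfl
    | succ k ih =>
      intro x y hx hy hxy
      obtain ⟨z, hz⟩ := exists_cycPos_eq m (q := cycPos n m x + k) (by
        have := cycPos_lt m y
        omega)
      have hzS : z ∈ S := h x hx y hy z (by omega) (by omega)
      have hzy : (cycleGraph n).Adj z y := cycleGraph_adj_of_cycPos_eq_succ (m := m) (by omega)
      exact (ih x z hx hzS hz).trans (SimpleGraph.Adj.reachable hzy)
  rintro ⟨x, hx⟩ ⟨y, hy⟩
  rcases le_total (cycPos n m x) (cycPos n m y) with hxy | hyx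
  · exact reach (cycPos n m y - cycPos n m x) x y hx hy (by omega)
  · exact (reach (cycPos n m x - cycPos n m y) y x hy hx (by omega)).symm

lemma isTube_univ (hn : 0 < n) : IsTube (cycleGraph n) (univ : Finset (Fin n)) :=
  (isIntervalAt_univ ⟨0, hn⟩).isTube ⟨⟨0, hn⟩, mem_univ _⟩

lemma isTube_univ_erase {x y : Fin n} (hxy : x ≠ y) :
    IsTube (cycleGraph n) (univ.erase x) :=
  (isIntervalAt_univ_erase x).isTube ⟨y, mem_erase.2 ⟨hxy.symm, mem_univ y⟩⟩

lemma IsIntervalAt.cycPos_lt_iff {v x y : Fin n} (hS : IsIntervalAt m S) (hv : v ∉ S)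
    (hx : x ∈ S) (hy : y ∈ S) :
    cycPos n m x < cycPos n m v ↔ cycPos n m y < cycPos n m v := by
  have key : ∀ a ∈ S, ∀ b ∈ S,
      cycPos n m a < cycPos n m v → cycPos n m b < cycPos n m v := by
    intro a ha b hb hav
    by_contra! hvb
    exact hv (hS a ha b hb v hav.le hvb)
  exact ⟨key x hx y hy, key y hy x hx⟩

end Intervals

section Sides

variable {n : ℕ}

/-- The vertices of `A` strictly on the same side of `v` as `w` in the order `<_m`. -/
def sideOf (m v w : Fin n) (A : Finset (Fin n)) : Finset (Fin n) :=
  A.filter fun z => z ≠ v ∧ (cycPos n m z < cycPos n m v ↔ cycPos n m w < cycPos n m v)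

variable {m v w : Fin n} {A : Finset (Fin n)}

lemma mem_sideOf {z : Fin n} : z ∈ sideOf m v w A ↔
    z ∈ A ∧ z ≠ v ∧ (cycPos n m z < cycPos n m v ↔ cycPos n m w < cycPos n m v) :=
  mem_filter

lemma sideOf_subset : sideOf m v w A ⊆ A := filter_subset _ _

lemma sideOf_congr {w' : Fin n}
    (h : cycPos n m w < cycPos n m v ↔ cycPos n m w' < cycPos n m v) :
    sideOf m v w A = sideOf m v w' A := by
  ext z
  simp only [mem_sideOf, h]

lemma IsIntervalAt.sideOf (hA : IsIntervalAt m A) : IsIntervalAt m (sideOf m v w A) := by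
  intro a ha b hb z haz hzb
  rw [mem_sideOf] at ha hb ⊢
  have hpos : ∀ y, y ≠ v → cycPos n m y ≠ cycPos n m v :=
    fun y hy h => hy (cycPos_injective m h)
  have := hpos a ha.2.1
  have := hpos b hb.2.1
  have key : (cycPos n m z < cycPos n m v ↔ cycPos n m w < cycPos n m v) ∧
      cycPos n m z ≠ cycPos n m v := by
    by_cases hwv : cycPos n m w < cycPos n m v
    · simp only [hwv, iff_true] at ha hb ⊢
      omega
    · simp only [hwv, iff_false, not_lt] at ha hb ⊢
      omega
  exact ⟨hA a ha.1 b hb.1 z haz hzb, fun hzv => key.2 (hzv ▸ rfl), key.1⟩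

lemma isTube_sideOf (hA : IsTube (cycleGraph n) A) (hmA : m ∉ A) (hw : w ∈ A) (hwv : w ≠ v) :
    IsTube (cycleGraph n) (sideOf m v w A) :=
  (hA.isIntervalAt hmA).sideOf.isTube ⟨w, mem_sideOf.2 ⟨hw, hwv, Iff.rfl⟩⟩

/-- Beyond `v`, the union with `sideOf m v w A` would be an interval containing `v`. -/
lemma tubeCompatible_sideOf {X : Finset (Fin n)} (hX : IsTube (cycleGraph n) X) (hXA : X ⊆ A)
    (hmA : m ∉ A) (hvX : v ∉ X) (hw : w ∈ A) (hwv : w ≠ v) :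
    TubeCompatible (cycleGraph n) (sideOf m v w A) X := by
  have hmX : m ∉ X := fun h => hmA (hXA h)
  obtain ⟨x, hx⟩ := hX.1
  by_cases hside : cycPos n m x < cycPos n m v ↔ cycPos n m w < cycPos n m v
  · refine Or.inr (Or.inl fun z hz => mem_sideOf.2 ⟨hXA hz, fun h => hvX (h ▸ hz), ?_⟩)
    exact ((hX.isIntervalAt hmX).cycPos_lt_iff hvX hz hx).trans hside
  · refine Or.inr (Or.inr fun hU => ?_)
    have hI := hU.isIntervalAt fun h =>
      (mem_union.1 h).elim (fun h => hmA (sideOf_subset h)) hmX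
    have hwS : w ∈ sideOf m v w A := mem_sideOf.2 ⟨hw, hwv, Iff.rfl⟩
    have hwv' : cycPos n m w ≠ cycPos n m v := fun h => hwv (cycPos_injective m h)
    have hvU : v ∈ sideOf m v w A ∪ X := by
      by_cases hlt : cycPos n m w < cycPos n m v
      · have : cycPos n m v ≤ cycPos n m x := not_lt.1 fun h => hside (iff_of_true h hlt)
        exact hI w (mem_union_left _ hwS) x (mem_union_right _ hx) v hlt.le this
      · have : cycPos n m x < cycPos n m v := not_le.1 fun h => hside (iff_of_false (by omega) hlt)
        exact hI x (mem_union_right _ hx) w (mem_union_left _ hwS) v this.le (by omega)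
    rcases mem_union.1 hvU with h | h
    exacts [(mem_sideOf.1 h).2.1 rfl, hvX h]

lemma IsTubing.forall_compatible_sideOf {T : Finset (Finset (Fin n))}
    (hT : IsTubing (cycleGraph n) T) (hA : A ∈ T) (hmA : m ∉ A) (hw : w ∈ A) (hwv : w ≠ v)
    (hv : ∀ X ∈ T, X ⊆ A → X ≠ A → v ∉ X) :
    ∀ X ∈ T, TubeCompatible (cycleGraph n) (sideOf m v w A) X := by
  refine hT.forall_compatible_of_subset hA (isTube_sideOf (hT.1 A hA) hmA hw hwv) sideOf_subset
    fun X hX hXA => ?_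
  by_cases hXA' : X = A
  · exact Or.inl (hXA' ▸ sideOf_subset)
  · exact tubeCompatible_sideOf (hT.1 X hX) hXA hmA (hv X hX hXA hXA') hw hwv

end Sides

section GTree

variable {n : ℕ} {J : Finset (Finset (Fin n))} {m : Fin n}

lemma IsMaxTubing.tubingDown_mem (hJ : IsMaxTubing (cycleGraph n) J) (x : Fin n) :
    tubingDown J x ∈ J := by
  rcases hJ.1.tubingDown_mem_or_eq_univ x with hx | hx
  · exact hx
  · rw [hx]
    exact hJ.mem_of_forall_compatible (isTube_univ x.pos) fun X _ =>
      Or.inr (Or.inl (subset_univ X))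

lemma IsMaxTubing.univ_erase_mem (hJ : IsMaxTubing (cycleGraph n) J) {x y : Fin n}
    (hx : tubingDown J x = univ) (hyx : y ≠ x) : univ.erase x ∈ J := by
  refine hJ.mem_of_forall_compatible (isTube_univ_erase hyx.symm) fun X hX => ?_
  by_cases hXu : X = univ
  · exact Or.inl (by rw [hXu]; exact subset_univ _)
  · exact Or.inr (Or.inl fun z hz =>
      mem_erase.2 ⟨fun h => notMem_of_tubingDown_eq_univ hx hX hXu (h ▸ hz),
        mem_univ z⟩)

lemma eq_root_of_tubingDown_eq_univ (hJ : IsMaxTubing (cycleGraph n) J)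
    (hm : tubingDown J m = univ) {x : Fin n} (hx : tubingDown J x = univ) :
    x = m := by
  by_contra hxm
  have hsub := tubingDown_subset (hJ.univ_erase_mem hx (Ne.symm hxm))
    (mem_erase.2 ⟨Ne.symm hxm, mem_univ m⟩)
  rw [hm] at hsub
  exact notMem_erase x _ (hsub (mem_univ x))

lemma eq_root_of_root_treeLE (hJ : IsMaxTubing (cycleGraph n) J) (hm : tubingDown J m = univ)
    {x : Fin n} (h : treeLE J m x) : x = m :=
  eq_root_of_tubingDown_eq_univ hJ hm (univ_subset_iff.1 (hm ▸ treeLE_iff_subset.1 h))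

lemma root_notMem_tubingDown (hJ : IsMaxTubing (cycleGraph n) J)
    (hm : tubingDown J m = univ) {x : Fin n} (hx : x ≠ m) : m ∉ tubingDown J x :=
  fun h => hx (eq_root_of_root_treeLE hJ hm h)

lemma sideOf_tubingDown_mem (hJ : IsMaxTubing (cycleGraph n) J)
    (hm : tubingDown J m = univ) {p w : Fin n} (hp : p ≠ m) (hw : w ∈ tubingDown J p)
    (hwp : w ≠ p) : sideOf m p w (tubingDown J p) ∈ J := by
  have hmp := root_notMem_tubingDown hJ hm hp
  refine hJ.mem_of_forall_compatible (isTube_sideOf (hJ.1.1 _ (hJ.tubingDown_mem p)) hmp hw hwp)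
    (hJ.1.forall_compatible_sideOf (hJ.tubingDown_mem p) hmp hw hwp ?_)
  exact fun X hX hXp hne hpX => hne (hXp.antisymm (tubingDown_subset hX hpX))

/-- If two vertices had the same tube, the side of one containing the other would be a tube of
`J` containing the second but not the first. -/
lemma tubingDown_injective (hJ : IsMaxTubing (cycleGraph n) J)
    (hm : tubingDown J m = univ) : Function.Injective (tubingDown J) := by
  intro a b hab
  by_contra hne
  by_cases hbm : b = m
  · exact hne (hbm ▸ eq_root_of_tubingDown_eq_univ hJ hm (hab.trans (hbm ▸ hm)))
  have ha : a ∈ tubingDown J b := hab ▸ mem_tubingDown_self J a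
  have hS := sideOf_tubingDown_mem hJ hm hbm ha hne
  have hbS := tubingDown_subset hS (mem_sideOf.2 ⟨ha, hne, Iff.rfl⟩)
    (hab ▸ mem_tubingDown_self J b)
  exact (mem_sideOf.1 hbS).2.1 rfl

lemma exists_treeCovBy (hJ : IsMaxTubing (cycleGraph n) J) (hm : tubingDown J m = univ)
    {x : Fin n} (hx : x ≠ m) : ∃ p, TreeCovBy J x p := by
  obtain ⟨p, hpA, hmin⟩ := (univ.filter fun z => treeLE J x z ∧ z ≠ x).exists_min_image
    (fun z => (tubingDown J z).card)
    ⟨m, mem_filter.2 ⟨mem_univ m, by rw [treeLE, hm]; exact mem_univ x, Ne.symm hx⟩⟩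
  obtain ⟨hxp, hpx⟩ := (mem_filter.1 hpA).2
  refine ⟨p, hxp, Ne.symm hpx, fun z hxz hzp => or_iff_not_imp_left.2 fun hzx => ?_⟩
  exact tubingDown_injective hJ hm
    (eq_of_subset_of_card_le (treeLE_iff_subset.1 hzp) (hmin z (by simp [hxz, hzx])))

lemma not_treeCovBy_root (hJ : IsMaxTubing (cycleGraph n) J) (hm : tubingDown J m = univ)
    (p : Fin n) : ¬ TreeCovBy J m p :=
  fun h => h.2.1 (eq_root_of_root_treeLE hJ hm h.1).symm

/-- Junk value `x` when `x` is the root. -/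
noncomputable def treeParent (J : Finset (Finset (Fin n))) (x : Fin n) : Fin n :=
  if h : ∃ p, TreeCovBy J x p then h.choose else x

lemma treeParent_root (hJ : IsMaxTubing (cycleGraph n) J) (hm : tubingDown J m = univ) :
    treeParent J m = m :=
  dif_neg fun ⟨p, hp⟩ => not_treeCovBy_root hJ hm p hp

lemma treeCovBy_iff (hJ : IsMaxTubing (cycleGraph n) J) (hm : tubingDown J m = univ)
    {c p : Fin n} : TreeCovBy J c p ↔ c ≠ m ∧ treeParent J c = p := by
  refine ⟨fun h => ⟨?_, ?_⟩, fun ⟨hc, hp⟩ => ?_⟩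
  · rintro rfl
    exact not_treeCovBy_root hJ hm p h
  · rw [treeParent, dif_pos ⟨p, h⟩]
    exact hJ.1.treeCovBy_unique (Exists.choose_spec _) h
  · have h := exists_treeCovBy hJ hm hc
    rw [← hp, treeParent, dif_pos h]
    exact h.choose_spec

lemma treeCovBy_treeParent (hJ : IsMaxTubing (cycleGraph n) J)
    (hm : tubingDown J m = univ) {x : Fin n} (hx : x ≠ m) : TreeCovBy J x (treeParent J x) :=
  (treeCovBy_iff hJ hm).2 ⟨hx, rfl⟩

lemma exists_iterate_treeParent_eq (hJ : IsMaxTubing (cycleGraph n) J)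
    (hm : tubingDown J m = univ) {x y : Fin n} (h : treeLE J x y) :
    ∃ i, (treeParent J)^[i] x = y := by
  induction hk : (tubingDown J y).card - (tubingDown J x).card using Nat.strong_induction_on
    generalizing x with
  | _ k ih =>
  by_cases hxy : x = y
  · exact ⟨0, hxy⟩
  have hxm : x ≠ m := by
    rintro rfl
    exact hxy (eq_root_of_root_treeLE hJ hm h).symm
  have hp := treeCovBy_treeParent hJ hm hxm
  rcases hJ.1.tubingDown_subset_or_subset h hp.1 with hyp | hpy
  · refine ⟨1, ?_⟩
    exact ((hp.2.2 y h (hyp (mem_tubingDown_self J y))).resolve_left (Ne.symm hxy)).symm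
  · have hlt : (tubingDown J x).card < (tubingDown J (treeParent J x)).card := by
      refine card_lt_card (Finset.ssubset_iff_subset_ne.2
        ⟨treeLE_iff_subset.1 hp.1, fun e => hp.2.1 (tubingDown_injective hJ hm e)⟩)
    obtain ⟨i, hi⟩ := ih _ (by
      have := card_le_card hpy
      omega) (hpy (mem_tubingDown_self J _)) rfl
    exact ⟨i + 1, hi⟩

end GTree

section Children

variable {n : ℕ} {J : Finset (Finset (Fin n))} {m : Fin n}

lemma tubingDown_eq_univ_erase_of_treeCovBy_root (hJ : IsMaxTubing (cycleGraph n) J)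
    (hm : tubingDown J m = univ) {c : Fin n} (h : TreeCovBy J c m) :
    tubingDown J c = univ.erase m :=
  hJ.1.tubingDown_eq_of_treeCovBy h (hJ.univ_erase_mem hm h.2.1)
    (mem_erase.2 ⟨h.2.1, mem_univ c⟩) (hm.symm ▸ subset_univ _)
    (notMem_erase m _)

lemma tubingDown_eq_sideOf_of_treeCovBy (hJ : IsMaxTubing (cycleGraph n) J)
    (hm : tubingDown J m = univ) {c p : Fin n} (h : TreeCovBy J c p) (hp : p ≠ m) :
    tubingDown J c = sideOf m p c (tubingDown J p) :=
  hJ.1.tubingDown_eq_of_treeCovBy h (sideOf_tubingDown_mem hJ hm hp h.1 h.2.1)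
    (mem_sideOf.2 ⟨h.1, h.2.1, Iff.rfl⟩) sideOf_subset fun hpS => (mem_sideOf.1 hpS).2.1 rfl

end Children

section Counting

variable {n : ℕ} {J : Finset (Finset (Fin n))} {m : Fin n}

/-- Edges of the G-tree are recorded by their lower endpoint. -/
noncomputable def gTreeRightEdges (J : Finset (Finset (Fin n))) (m : Fin n) : Finset (Fin n) :=
  univ.filter fun c => ∃ p, TreeCovBy J c p ∧ p ≠ m ∧ cycPos n m p < cycPos n m c

noncomputable def gTreeDescents (J : Finset (Finset (Fin n))) : Finset (Fin n) :=
  univ.filter fun c => ∃ p, TreeCovBy J c p ∧ p < c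

noncomputable def gTreeBranchPoints (J : Finset (Finset (Fin n))) : Finset (Fin n) :=
  univ.filter fun p => ∃ c₁ c₂, c₁ ≠ c₂ ∧ TreeCovBy J c₁ p ∧ TreeCovBy J c₂ p

lemma mem_gTreeRightEdges (hJ : IsMaxTubing (cycleGraph n) J) (hm : tubingDown J m = univ)
    {c : Fin n} : c ∈ gTreeRightEdges J m ↔
      c ≠ m ∧ treeParent J c ≠ m ∧ cycPos n m (treeParent J c) < cycPos n m c := by
  simp [gTreeRightEdges, treeCovBy_iff hJ hm, and_assoc]

lemma mem_gTreeDescents (hJ : IsMaxTubing (cycleGraph n) J) (hm : tubingDown J m = univ)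
    {c : Fin n} : c ∈ gTreeDescents J ↔ c ≠ m ∧ treeParent J c < c := by
  simp [gTreeDescents, treeCovBy_iff hJ hm, and_assoc]

lemma zero_mem_tubingDown (hJ : IsMaxTubing (cycleGraph n) J) (hm : tubingDown J m = univ)
    {c : Fin n} (hc : c ≤ m) (hp : m < treeParent J c) :
    (⟨0, m.pos⟩ : Fin n) ∈ tubingDown J c := by
  have hcm : c ≠ m := by
    rintro rfl
    rw [treeParent_root hJ hm] at hp
    exact lt_irrefl c hp
  have hpm : treeParent J c ≠ m := hp.ne'
  have hcov := treeCovBy_treeParent hJ hm hcm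
  have hposp := cycPos_of_lt hp
  have hposc := cycPos_of_le hc
  have hpos0 := cycPos_of_le (m := m) (v := ⟨0, m.pos⟩) (Fin.le_def.2 (Nat.zero_le _))
  have := (treeParent J c).is_lt
  simp only [Fin.lt_def, Fin.le_def] at hp hc
  dsimp only at hpos0
  have h0p : (⟨0, m.pos⟩ : Fin n) ∈ tubingDown J (treeParent J c) :=
    (hJ.1.1 _ (hJ.tubingDown_mem _)).isIntervalAt (root_notMem_tubingDown hJ hm hpm) _
      (mem_tubingDown_self J _) c hcov.1 _ (by omega) (by omega)
  rw [tubingDown_eq_sideOf_of_treeCovBy hJ hm hcov hpm, mem_sideOf]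
  refine ⟨h0p, fun h => ?_, iff_of_false (by omega) (by omega)⟩
  rw [← h] at hp
  exact absurd hp (by simp)

lemma sdiff_gTreeDescents_subset (hJ : IsMaxTubing (cycleGraph n) J)
    (hm : tubingDown J m = univ) : gTreeRightEdges J m \ gTreeDescents J ⊆
      univ.filter fun c => ¬ m < c ∧ m < treeParent J c := by
  intro c hc
  rw [mem_sdiff, mem_gTreeRightEdges hJ hm, mem_gTreeDescents hJ hm] at hc
  obtain ⟨⟨hcm, hpm, hlt⟩, hnd⟩ := hc
  have hnd := not_and.1 hnd hcm
  have := m.is_lt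
  rw [ne_eq, Fin.ext_iff] at hcm hpm
  simp only [Fin.lt_def, not_lt] at hnd
  simp only [mem_filter, mem_univ, true_and, Fin.lt_def]
  rcases cycPos_cases m c with ⟨h, e⟩ | ⟨h, e⟩ <;>
  rcases cycPos_cases m (treeParent J c) with ⟨h', e'⟩ | ⟨h', e'⟩ <;>
  omega

lemma filter_subset_sdiff_gTreeRightEdges (hJ : IsMaxTubing (cycleGraph n) J)
    (hm : tubingDown J m = univ) : (univ.filter fun u => m < u ∧ ¬ m < treeParent J u) ⊆
      gTreeDescents J \ gTreeRightEdges J m := by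
  intro u hu
  simp only [mem_filter, mem_univ, true_and, not_lt] at hu
  rw [mem_sdiff, mem_gTreeRightEdges hJ hm, mem_gTreeDescents hJ hm]
  refine ⟨⟨hu.1.ne', hu.2.trans_lt hu.1⟩, fun ⟨_, hpm, hlt⟩ => ?_⟩
  rw [cycPos_of_lt hu.1, cycPos_of_le hu.2] at hlt
  have := u.is_lt
  have := lt_of_le_of_ne hu.2 hpm
  simp only [Fin.lt_def] at hu this
  omega

lemma exists_iterate_treeParent_eq_or_eq (hJ : IsMaxTubing (cycleGraph n) J)
    (hm : tubingDown J m = univ) {c d : Fin n} (hc : c ≤ m) (hpc : m < treeParent J c)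
    (hd : d ≤ m) (hpd : m < treeParent J d) :
    ∃ i, (treeParent J)^[i] c = d ∨ (treeParent J)^[i] d = c := by
  rcases hJ.1.tubingDown_subset_or_subset (zero_mem_tubingDown hJ hm hc hpc)
    (zero_mem_tubingDown hJ hm hd hpd) with hcd | hdc
  · obtain ⟨i, hi⟩ := exists_iterate_treeParent_eq hJ hm (treeLE_iff_subset.2 hcd)
    exact ⟨i, Or.inl hi⟩
  · obtain ⟨i, hi⟩ := exists_iterate_treeParent_eq hJ hm (treeLE_iff_subset.2 hdc)
    exact ⟨i, Or.inr hi⟩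

lemma card_gTreeRightEdges_le (hJ : IsMaxTubing (cycleGraph n) J)
    (hm : tubingDown J m = univ) :
    (gTreeRightEdges J m).card ≤ (gTreeDescents J).card := by
  have hcount := card_filter_enter_le_card_filter_exit (f := treeParent J) (fun z => m < z)
    (treeParent_root hJ hm) (lt_irrefl m)
    (fun x => exists_iterate_treeParent_eq hJ hm (by rw [treeLE, hm]; exact mem_univ x))
    (fun c d hc hpc hd hpd =>
      exists_iterate_treeParent_eq_or_eq hJ hm (not_lt.1 hc) hpc (not_lt.1 hd) hpd)
  calc (gTreeRightEdges J m).card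
      = (gTreeRightEdges J m ∩ gTreeDescents J).card +
          (gTreeRightEdges J m \ gTreeDescents J).card := (card_inter_add_card_sdiff _ _).symm
    _ ≤ (gTreeDescents J ∩ gTreeRightEdges J m).card +
          (gTreeDescents J \ gTreeRightEdges J m).card := by
        rw [inter_comm]
        exact Nat.add_le_add_left ((card_le_card (sdiff_gTreeDescents_subset hJ hm)).trans
          (hcount.trans (card_le_card (filter_subset_sdiff_gTreeRightEdges hJ hm)))) _
    _ = (gTreeDescents J).card := card_inter_add_card_sdiff _ _

lemma card_gTreeBranchPoints_le (hJ : IsMaxTubing (cycleGraph n) J)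
    (hm : tubingDown J m = univ) :
    (gTreeBranchPoints J).card ≤ (gTreeRightEdges J m).card := by
  refine (card_le_card (t := (gTreeRightEdges J m).image (treeParent J))
    fun p hp => ?_).trans card_image_le
  obtain ⟨c₁, c₂, hne, h₁, h₂⟩ := (mem_filter.1 hp).2
  have hinj := tubingDown_injective hJ hm
  have hpm : p ≠ m := by
    rintro rfl
    exact hne (hinj ((tubingDown_eq_univ_erase_of_treeCovBy_root hJ hm h₁).trans
      (tubingDown_eq_univ_erase_of_treeCovBy_root hJ hm h₂).symm))
  have hright : ∃ c, TreeCovBy J c p ∧ cycPos n m p < cycPos n m c := by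
    by_contra! hleft
    have hlt : ∀ c, TreeCovBy J c p → cycPos n m c < cycPos n m p := fun c hc =>
      lt_of_le_of_ne (hleft c hc) fun e => hc.2.1 (cycPos_injective m e)
    refine hne (hinj ?_)
    rw [tubingDown_eq_sideOf_of_treeCovBy hJ hm h₁ hpm,
      tubingDown_eq_sideOf_of_treeCovBy hJ hm h₂ hpm,
      sideOf_congr (iff_of_true (hlt c₁ h₁) (hlt c₂ h₂))]
  obtain ⟨c, hc, hlt⟩ := hright
  obtain ⟨hcm, hcp⟩ := (treeCovBy_iff hJ hm).1 hc
  exact mem_image.2 ⟨c, (mem_gTreeRightEdges hJ hm).2 ⟨hcm, hcp ▸ hpm, hcp ▸ hlt⟩, hcp⟩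

end Counting

section Flips

variable {n : ℕ} {J : Finset (Finset (Fin n))} {m : Fin n}

lemma IsMaxTubing.flipCover_insert_erase {G : SimpleGraph (Fin n)} (hJ : IsMaxTubing G J)
    (hJn : J.card = n) {X : Finset (Fin n)} {x y : Fin n} (hy : tubingDown J y ∈ J)
    (hX : IsTube G X) (hcompat : ∀ Z ∈ J.erase (tubingDown J y), TubeCompatible G X Z)
    (hxX : x ∈ X) (hXx : X ⊆ tubingDown J x) (hyx : y ∈ tubingDown J x) (hyX : y ∉ X)
    (hxy : x < y) : FlipCover G (insert X (J.erase (tubingDown J y))) J := by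
  set K := insert X (J.erase (tubingDown J y))
  have hXJ : X ∉ J := fun h => hyX (tubingDown_subset h hxX hyx)
  have hXJ' : X ∉ J.erase (tubingDown J y) := fun h => hXJ (mem_of_mem_erase h)
  have hK : IsTubing G K := (hJ.1.mono (erase_subset _ _)).insert hX hcompat
  have hKn : K.card = n := by
    rw [card_insert_of_notMem hXJ', card_erase_of_mem hy, hJn]
    have := x.pos
    omega
  have hKmax : IsMaxTubing G K := ⟨hK, fun T hT hKT =>
    (eq_of_subset_of_card_le hKT (hT.card_le.trans hKn.ge)).symm⟩
  have hxK : tubingDown K x = X := by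
    refine (tubingDown_subset (mem_insert_self _ _) hxX).antisymm fun z hz => ?_
    refine mem_tubingDown.2 fun Z hZ hxZ => ?_
    rcases mem_insert.1 hZ with rfl | hZ
    · exact hz
    · exact tubingDown_subset (mem_of_mem_erase hZ) hxZ (hXx hz)
  exact ⟨hKmax, hJ, X, tubingDown J y, mem_insert_self _ _, hy, fun h => hXJ (h ▸ hy),
    erase_insert hXJ', x, y, hxK, rfl, hxy⟩

lemma IsMaxTubing.card_eq (hJ : IsMaxTubing (cycleGraph n) J) (hm : tubingDown J m = univ) :
    J.card = n :=
  hJ.1.card_le.antisymm (by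
    simpa using card_le_card_of_injOn (s := univ) (tubingDown J)
      (fun x _ => hJ.tubingDown_mem x) (tubingDown_injective hJ hm).injOn)

/-- The rotation at the edge `c ⋖ p`. -/
lemma exists_flip_tube (hJ : IsMaxTubing (cycleGraph n) J) (hm : tubingDown J m = univ)
    {c p : Fin n} (h : TreeCovBy J c p) : ∃ X, IsTube (cycleGraph n) X ∧
      (∀ Z ∈ J.erase (tubingDown J c), TubeCompatible (cycleGraph n) X Z) ∧
      p ∈ X ∧ X ⊆ tubingDown J p ∧ c ∉ X := by
  have hc : c ≠ m := ((treeCovBy_iff hJ hm).1 h).1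
  have hc_notMem : ∀ Z ∈ J.erase (tubingDown J c), Z ⊆ tubingDown J p →
      Z ≠ tubingDown J p → c ∉ Z := fun Z hZ =>
    hJ.1.notMem_of_treeCovBy h (mem_of_mem_erase hZ) (ne_of_mem_erase hZ)
  by_cases hpm : p = m
  · subst hpm
    refine ⟨univ.erase c, isTube_univ_erase hc, fun Z hZ => ?_,
      mem_erase.2 ⟨h.2.1.symm, mem_univ p⟩, hm.symm ▸ subset_univ _,
      notMem_erase c _⟩
    by_cases hZu : Z = univ
    · exact Or.inl (by rw [hZu]; exact subset_univ _)
    · have hcZ := hc_notMem Z hZ (hm ▸ subset_univ Z) (hm ▸ hZu)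
      exact Or.inr (Or.inl fun z hz => mem_erase.2 ⟨fun e => hcZ (e ▸ hz), mem_univ z⟩)
  · have hpA := mem_tubingDown_self J p
    have hmA := root_notMem_tubingDown hJ hm hpm
    have hA : tubingDown J p ∈ J.erase (tubingDown J c) := mem_erase.2
      ⟨fun e => h.2.1 (tubingDown_injective hJ hm e).symm, hJ.tubingDown_mem p⟩
    refine ⟨sideOf m c p (tubingDown J p),
      isTube_sideOf (hJ.1.1 _ (hJ.tubingDown_mem p)) hmA hpA h.2.1.symm,
      (hJ.1.mono (erase_subset _ _)).forall_compatible_sideOf hA hmA hpA h.2.1.symm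
        hc_notMem,
      mem_sideOf.2 ⟨hpA, h.2.1.symm, Iff.rfl⟩, sideOf_subset,
      fun hcX => (mem_sideOf.1 hcX).2.1 rfl⟩

lemma exists_flipCover_of_mem_gTreeDescents (hJ : IsMaxTubing (cycleGraph n) J)
    (hm : tubingDown J m = univ) {c : Fin n} (hc : c ∈ gTreeDescents J) :
    ∃ X ∉ J, FlipCover (cycleGraph n) (insert X (J.erase (tubingDown J c))) J := by
  obtain ⟨p, h, hpc⟩ := (mem_filter.1 hc).2
  obtain ⟨X, hX, hcompat, hpX, hXp, hcX⟩ := exists_flip_tube hJ hm h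
  exact ⟨X, fun hXJ => hcX (tubingDown_subset hXJ hpX h.1),
    hJ.flipCover_insert_erase (hJ.card_eq hm) (hJ.tubingDown_mem c) hX hcompat hpX hXp h.1 hcX
      hpc⟩

lemma card_gTreeDescents_le_one (hJ : IsMaxTubing (cycleGraph n) J)
    (hm : tubingDown J m = univ) (huniq : ∃! K, FlipCover (cycleGraph n) K J) :
    (gTreeDescents J).card ≤ 1 := by
  refine card_le_one.2 fun c hc c' hc' => ?_
  by_contra hne
  obtain ⟨X, -, hflip⟩ := exists_flipCover_of_mem_gTreeDescents hJ hm hc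
  obtain ⟨X', hX'J, hflip'⟩ := exists_flipCover_of_mem_gTreeDescents hJ hm hc'
  have hD' : tubingDown J c' ∈ insert X (J.erase (tubingDown J c)) :=
    mem_insert_of_mem (mem_erase.2
      ⟨fun e => hne (tubingDown_injective hJ hm e).symm, hJ.tubingDown_mem c'⟩)
  rw [huniq.unique hflip hflip'] at hD'
  rcases mem_insert.1 hD' with e | e
  · exact hX'J (e ▸ hJ.tubingDown_mem c')
  · exact notMem_erase _ _ e

end Flips

/-- The G-tree of a maximal tubing of the cycle has at least as many descents as right
edges, hence at least as many descents as branching points; consequently the G-tree of a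
join irreducible element has at most one branching point. -/
theorem cycle_descents_ge_right_edges (n : ℕ) (J : Finset (Finset (Fin n))) (m : Fin n)
    (hJ : IsMaxTubing (cycleGraph n) J) (hm : tubingDown J m = Finset.univ) :
    (Finset.univ.filter (fun c : Fin n =>
        ∃ p, TreeCovBy J c p ∧ p ≠ m ∧ cycPos n m p < cycPos n m c)).card
      ≤ (Finset.univ.filter (fun c : Fin n => ∃ p, TreeCovBy J c p ∧ p < c)).card ∧
    (Finset.univ.filter (fun p : Fin n =>
        ∃ c₁ c₂, c₁ ≠ c₂ ∧ TreeCovBy J c₁ p ∧ TreeCovBy J c₂ p)).card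
      ≤ (Finset.univ.filter (fun c : Fin n => ∃ p, TreeCovBy J c p ∧ p < c)).card ∧
    ((∃! K, FlipCover (cycleGraph n) K J) →
      (Finset.univ.filter (fun p : Fin n =>
        ∃ c₁ c₂, c₁ ≠ c₂ ∧ TreeCovBy J c₁ p ∧ TreeCovBy J c₂ p)).card ≤ 1) := by
  have hright : (gTreeRightEdges J m).card ≤ (gTreeDescents J).card :=
    card_gTreeRightEdges_le hJ hm
  have hbranch : (gTreeBranchPoints J).card ≤ (gTreeDescents J).card :=
    (card_gTreeBranchPoints_le hJ hm).trans hright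
  exact ⟨hright, hbranch, fun huniq => hbranch.trans (card_gTreeDescents_le_one hJ hm huniq)⟩
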